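/- arXiv:1205.6018 — 5 statements merged into one kernel-verified Lean document; each statement's English description precedes it below -/
import Mathlib

section
/- If h₁ : ℝⁿ → ℝ is non-negative, integrable, and symmetric unimodal about 0, and h₂ : ℝⁿ → ℝ is a probability density symmetric unimodal about 0, then h₁ * h₂ is symmetric unimodal about 0: there exists a non-increasing function ψ : [0,∞) → ℝ with (h₁ * h₂)(x) = ψ(‖x‖) for all x. -/
/-!
By the layer-cake formula, `h₁ z * h₂ (x - z) = ∫∫_{a, b > 0} 1[a < h₁ z] 1[b < h₂ (z - x)] da db`,
so `(h₁ * h₂) x = ∫∫ vol ({h₁ > a} ∩ (x + {h₂ > b})) da db`. Superlevel sets of symmetric unimodal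
functions are balls centred at `0`, and for two such sets `A`, `B` the volume of
`A ∩ (c • e₀ + B)` is non-increasing in `c ≥ 0`: slicing along lines parallel to `e₀` reduces this
to the overlap of two centred intervals, one of them shifted by `c`. Finally `h₁ * h₂` is radial
because it is invariant under the reflection exchanging `x` and `y` whenever `‖x‖ = ‖y‖`.
-/

open MeasureTheory

noncomputable def conv {n : ℕ} (f g : EuclideanSpace ℝ (Fin n) → ℝ) :
    EuclideanSpace ℝ (Fin n) → ℝ :=
  fun x => ∫ z, f z * g (x - z)

def SymmUnimodal {n : ℕ} (f : EuclideanSpace ℝ (Fin n) → ℝ) : Prop :=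
  ∃ φ : ℝ → ℝ, AntitoneOn φ (Set.Ici 0) ∧ ∀ x, f x = φ ‖x‖

open Set

/-- The balls centred at `0`, open or closed, of any radius in `[0, ∞]`. -/
def IsNormLowerSet {E : Type*} [Norm E] (A : Set E) : Prop :=
  ∀ ⦃z z' : E⦄, ‖z'‖ ≤ ‖z‖ → z ∈ A → z' ∈ A

lemma isNormLowerSet_setOf_lt {E : Type*} [Norm E] {φ : ℝ → ℝ} (hφ : Antitone φ) (a : ℝ) :
    IsNormLowerSet {z : E | a < φ ‖z‖} :=
  fun _ _ hle hz => hz.trans_le (hφ hle)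

lemma IsNormLowerSet.eq_univ_or_Ioo_subset_subset_Icc {S : Set ℝ} (hS : IsNormLowerSet S) :
    S = univ ∨ ∃ α, Ioo (-α) α ⊆ S ∧ S ⊆ Icc (-α) α := by
  by_cases hbdd : BddAbove (abs '' S)
  · right
    rcases S.eq_empty_or_nonempty with rfl | hne
    · exact ⟨0, by simp, empty_subset _⟩
    refine ⟨sSup (abs '' S), fun t ht => ?_, fun t ht => abs_le.mp (le_csSup hbdd ⟨t, ht, rfl⟩)⟩
    obtain ⟨_, ⟨t₀, ht₀, rfl⟩, hlt⟩ :=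
      exists_lt_of_lt_csSup (hne.image _) (abs_lt.mpr ⟨ht.1, ht.2⟩)
    exact hS hlt.le ht₀
  · left
    refine eq_univ_of_forall fun t => ?_
    obtain ⟨_, ⟨t₀, ht₀, rfl⟩, hlt⟩ := not_bddAbove_iff.mp hbdd |t|
    exact hS hlt.le ht₀

lemma volume_Icc_inter_Icc_le_volume_Ioo_inter_Ioo {α β r s : ℝ} (hr : 0 ≤ r) (hrs : r ≤ s) :
    volume (Icc (-α) α ∩ Icc (s - β) (s + β)) ≤ volume (Ioo (-α) α ∩ Ioo (r - β) (r + β)) := by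
  rw [Icc_inter_Icc, Ioo_inter_Ioo, Real.volume_Icc, Real.volume_Ioo]
  refine ENNReal.ofReal_le_ofReal ?_
  simp only [min_def, max_def]
  split_ifs <;> linarith

lemma IsNormLowerSet.antitoneOn_volume_inter_preimage_sub {S T : Set ℝ}
    (hS : IsNormLowerSet S) (hT : IsNormLowerSet T) :
    AntitoneOn (fun c => volume (S ∩ (· - c) ⁻¹' T)) (Ici 0) := by
  intro r hr s _ hrs
  rcases hS.eq_univ_or_Ioo_subset_subset_Icc with rfl | ⟨α, hSα, hSα'⟩
  · simp only [univ_inter, sub_eq_add_neg, measure_preimage_add_right, le_refl]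
  rcases hT.eq_univ_or_Ioo_subset_subset_Icc with rfl | ⟨β, hTβ, hTβ'⟩
  · simp
  calc volume (S ∩ (· - s) ⁻¹' T)
      ≤ volume (Icc (-α) α ∩ Icc (s - β) (s + β)) := by
        refine measure_mono (inter_subset_inter hSα' fun t ht => ?_)
        have := hTβ' ht
        exact ⟨by linarith [this.1], by linarith [this.2]⟩
    _ ≤ volume (Ioo (-α) α ∩ Ioo (r - β) (r + β)) :=
        volume_Icc_inter_Icc_le_volume_Ioo_inter_Ioo hr hrs
    _ ≤ volume (S ∩ (· - r) ⁻¹' T) :=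
        measure_mono (inter_subset_inter hSα fun t ht =>
          hTβ ⟨by linarith [ht.1], by linarith [ht.2]⟩)

noncomputable def consMeasurableEquiv (m : ℕ) :
    ℝ × (Fin m → ℝ) ≃ᵐ EuclideanSpace ℝ (Fin (m + 1)) :=
  (MeasurableEquiv.piFinSuccAbove (fun _ => ℝ) 0).symm.trans (MeasurableEquiv.toLp 2 _)

section Cons

variable {m : ℕ}

lemma consMeasurableEquiv_apply (t : ℝ) (w : Fin m → ℝ) (i : Fin (m + 1)) :
    consMeasurableEquiv m (t, w) i = (Fin.cons t w : Fin (m + 1) → ℝ) i := by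
  simp [consMeasurableEquiv, MeasurableEquiv.piFinSuccAbove_symm_apply, Fin.insertNthEquiv]

lemma measurePreserving_consMeasurableEquiv :
    MeasurePreserving (consMeasurableEquiv m) :=
  (volume_preserving_piFinSuccAbove (fun _ => ℝ) 0).symm _ |>.trans
    (PiLp.volume_preserving_toLp _)

lemma consMeasurableEquiv_sub_smul_single (t c : ℝ) (w : Fin m → ℝ) :
    consMeasurableEquiv m (t, w) - c • EuclideanSpace.single 0 1 =
      consMeasurableEquiv m (t - c, w) := by
  ext i
  induction i using Fin.cases with
  | zero => simp [consMeasurableEquiv_apply]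
  | succ j => simp [consMeasurableEquiv_apply, Fin.succ_ne_zero]

lemma norm_consMeasurableEquiv_le {t t' : ℝ} (h : |t'| ≤ |t|) (w : Fin m → ℝ) :
    ‖consMeasurableEquiv m (t', w)‖ ≤ ‖consMeasurableEquiv m (t, w)‖ := by
  simp only [EuclideanSpace.norm_eq, Fin.sum_univ_succ, consMeasurableEquiv_apply,
    Fin.cons_zero, Fin.cons_succ, Real.norm_eq_abs, sq_abs]
  have : t' ^ 2 ≤ t ^ 2 := sq_le_sq.mpr h
  gcongr

lemma IsNormLowerSet.preimage_cons {A : Set (EuclideanSpace ℝ (Fin (m + 1)))}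
    (hA : IsNormLowerSet A) (w : Fin m → ℝ) :
    IsNormLowerSet {t : ℝ | consMeasurableEquiv m (t, w) ∈ A} :=
  fun _ _ h ht => hA (norm_consMeasurableEquiv_le h w) ht

end Cons

lemma volume_inter_preimage_sub_smul_single {m : ℕ} {A B : Set (EuclideanSpace ℝ (Fin (m + 1)))}
    (hA : MeasurableSet A) (hB : MeasurableSet B) (c : ℝ) :
    volume (A ∩ (· - c • EuclideanSpace.single 0 1) ⁻¹' B) =
      ∫⁻ w : Fin m → ℝ, volume ({t | consMeasurableEquiv m (t, w) ∈ A} ∩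
        (· - c) ⁻¹' {t | consMeasurableEquiv m (t, w) ∈ B}) := by
  have hmeas : MeasurableSet (A ∩ (· - c • EuclideanSpace.single 0 1) ⁻¹' B) :=
    hA.inter (hB.preimage (measurable_id.sub_const _))
  rw [← measurePreserving_consMeasurableEquiv.measure_preimage hmeas.nullMeasurableSet,
    Measure.volume_eq_prod, Measure.prod_apply_symm ((consMeasurableEquiv m).measurable hmeas)]
  simp only [preimage_inter, preimage_preimage, consMeasurableEquiv_sub_smul_single]
  rfl

lemma IsNormLowerSet.antitoneOn_volume_inter_preimage_sub_smul_single {m : ℕ}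
    {A B : Set (EuclideanSpace ℝ (Fin (m + 1)))} (hA : IsNormLowerSet A) (hB : IsNormLowerSet B)
    (hAm : MeasurableSet A) (hBm : MeasurableSet B) :
    AntitoneOn (fun c : ℝ => volume (A ∩ (· - c • EuclideanSpace.single 0 1) ⁻¹' B)) (Ici 0) := by
  intro r hr s hs hrs
  simp only [volume_inter_preimage_sub_smul_single hAm hBm]
  exact lintegral_mono fun w =>
    (hA.preimage_cons w).antitoneOn_volume_inter_preimage_sub (hB.preimage_cons w) hr hs hrs

lemma lintegral_ofReal_mul_ofReal_eq_lintegral_measure {α : Type*} [MeasurableSpace α]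
    {μ : Measure α} [SFinite μ] {f g : α → ℝ} (hf : Measurable f) (hg : Measurable g) :
    ∫⁻ z, ENNReal.ofReal (f z) * ENNReal.ofReal (g z) ∂μ =
      ∫⁻ p : ℝ × ℝ, μ {z | p ∈ Ioo 0 (f z) ×ˢ Ioo 0 (g z)} := by
  set Q : Set (α × (ℝ × ℝ)) := {q | q.2 ∈ Ioo 0 (f q.1) ×ˢ Ioo 0 (g q.1)}
  have hQ : MeasurableSet Q := by
    simp only [Q, mem_prod, mem_Ioo]
    measurability
  have hslice : ∀ z, ENNReal.ofReal (f z) * ENNReal.ofReal (g z) = volume (Prod.mk z ⁻¹' Q) := by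
    intro z
    change _ = volume (Ioo 0 (f z) ×ˢ Ioo 0 (g z))
    rw [Measure.volume_eq_prod, Measure.prod_prod, Real.volume_Ioo, Real.volume_Ioo, sub_zero,
      sub_zero]
  simp_rw [hslice]
  rw [← Measure.prod_apply hQ, Measure.prod_apply_symm hQ]
  rfl

lemma ofReal_conv_eq_lintegral_volume {n : ℕ} {f g : EuclideanSpace ℝ (Fin n) → ℝ}
    (hf : Measurable f) (hg : Measurable g) (hf0 : ∀ z, 0 ≤ f z) (hg0 : ∀ z, 0 ≤ g z)
    {x : EuclideanSpace ℝ (Fin n)} (hint : Integrable fun z => f z * g (x - z)) :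
    ENNReal.ofReal (conv f g x) =
      ∫⁻ p : ℝ × ℝ, volume {z | p ∈ Ioo 0 (f z) ×ˢ Ioo 0 (g (x - z))} := by
  rw [conv, ofReal_integral_eq_lintegral_ofReal hint
    (.of_forall fun z => mul_nonneg (hf0 z) (hg0 _))]
  simp_rw [ENNReal.ofReal_mul (hf0 _)]
  exact lintegral_ofReal_mul_ofReal_eq_lintegral_measure hf (by fun_prop)

lemma SymmUnimodal.exists_antitone {n : ℕ} {h : EuclideanSpace ℝ (Fin n) → ℝ}
    (hs : SymmUnimodal h) : ∃ φ : ℝ → ℝ, Antitone φ ∧ ∀ x, h x = φ ‖x‖ := by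
  obtain ⟨φ, hφ, hrep⟩ := hs
  refine ⟨fun ρ => φ (max ρ 0), fun a b hab => hφ (le_max_right a 0) (le_max_right b 0)
    (max_le_max_right 0 hab), fun x => ?_⟩
  simp only [hrep, max_eq_left (norm_nonneg x)]

lemma antitoneOn_volume_radial_layer {m : ℕ} {φ₁ φ₂ : ℝ → ℝ} (hφ₁ : Antitone φ₁)
    (hφ₂ : Antitone φ₂) (p : ℝ × ℝ) :
    AntitoneOn (fun c : ℝ => volume {z : EuclideanSpace ℝ (Fin (m + 1)) |
      p ∈ Ioo 0 (φ₁ ‖z‖) ×ˢ Ioo 0 (φ₂ ‖c • EuclideanSpace.single 0 1 - z‖)}) (Ici 0) := by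
  set u : EuclideanSpace ℝ (Fin (m + 1)) := EuclideanSpace.single 0 1
  by_cases hp : 0 < p.1 ∧ 0 < p.2
  · have hset : ∀ c : ℝ, {z | p ∈ Ioo 0 (φ₁ ‖z‖) ×ˢ Ioo 0 (φ₂ ‖c • u - z‖)} =
        {z | p.1 < φ₁ ‖z‖} ∩ (· - c • u) ⁻¹' {z | p.2 < φ₂ ‖z‖} := by
      intro c
      ext z
      simp [hp.1, hp.2, norm_sub_rev]
    simp only [hset]
    exact (isNormLowerSet_setOf_lt hφ₁ p.1).antitoneOn_volume_inter_preimage_sub_smul_single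
      (isNormLowerSet_setOf_lt hφ₂ p.2)
      (measurableSet_lt measurable_const (hφ₁.measurable.comp measurable_norm))
      (measurableSet_lt measurable_const (hφ₂.measurable.comp measurable_norm))
  · have hempty : ∀ c : ℝ, {z | p ∈ Ioo 0 (φ₁ ‖z‖) ×ˢ Ioo 0 (φ₂ ‖c • u - z‖)} = ∅ :=
      fun c => eq_empty_of_forall_notMem fun z hz => hp ⟨hz.1.1, hz.2.1⟩
    simp only [hempty]
    exact antitoneOn_const

lemma antitoneOn_conv_smul_single {m : ℕ} {h₁ h₂ : EuclideanSpace ℝ (Fin (m + 1)) → ℝ}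
    {φ₁ φ₂ : ℝ → ℝ} (hφ₁ : Antitone φ₁) (hφ₂ : Antitone φ₂)
    (hrep₁ : ∀ x, h₁ x = φ₁ ‖x‖) (hrep₂ : ∀ x, h₂ x = φ₂ ‖x‖)
    (h₁nn : ∀ x, 0 ≤ h₁ x) (h₂nn : ∀ x, 0 ≤ h₂ x) (h₁int : Integrable h₁) :
    AntitoneOn (fun c : ℝ => conv h₁ h₂ (c • EuclideanSpace.single 0 1)) (Ici 0) := by
  obtain rfl : h₁ = fun x => φ₁ ‖x‖ := funext hrep₁
  obtain rfl : h₂ = fun x => φ₂ ‖x‖ := funext hrep₂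
  have hm₁ : Measurable fun x : EuclideanSpace ℝ (Fin (m + 1)) => φ₁ ‖x‖ :=
    hφ₁.measurable.comp measurable_norm
  have hm₂ : Measurable fun x : EuclideanSpace ℝ (Fin (m + 1)) => φ₂ ‖x‖ :=
    hφ₂.measurable.comp measurable_norm
  have hint : ∀ x : EuclideanSpace ℝ (Fin (m + 1)), Integrable fun z => φ₁ ‖z‖ * φ₂ ‖x - z‖ :=
    fun x => h₁int.mul_bdd (hm₂.comp (measurable_const.sub measurable_id)).aestronglyMeasurable
      (.of_forall fun z => (abs_of_nonneg (h₂nn _)).trans_le (hφ₂ (norm_nonneg _)))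
  intro r hr s hs hrs
  have hconv_nonneg :
      0 ≤ conv (fun x => φ₁ ‖x‖) (fun x => φ₂ ‖x‖) (r • EuclideanSpace.single 0 1) :=
    integral_nonneg fun z => mul_nonneg (h₁nn z) (h₂nn _)
  dsimp only
  rw [← ENNReal.ofReal_le_ofReal_iff hconv_nonneg,
    ofReal_conv_eq_lintegral_volume hm₁ hm₂ h₁nn h₂nn (hint _),
    ofReal_conv_eq_lintegral_volume hm₁ hm₂ h₁nn h₂nn (hint _)]
  exact lintegral_mono fun p => antitoneOn_volume_radial_layer hφ₁ hφ₂ p hr hs hrs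

lemma conv_linearIsometryEquiv {n : ℕ} {f g : EuclideanSpace ℝ (Fin n) → ℝ}
    (e : EuclideanSpace ℝ (Fin n) ≃ₗᵢ[ℝ] EuclideanSpace ℝ (Fin n))
    (hf : ∀ z, f (e z) = f z) (hg : ∀ z, g (e z) = g z) (x : EuclideanSpace ℝ (Fin n)) :
    conv f g (e x) = conv f g x := by
  calc conv f g (e x) = ∫ z, f (e z) * g (e x - e z) :=
        (e.measurePreserving.integral_comp e.toHomeomorph.measurableEmbedding _).symm
    _ = conv f g x := by simp_rw [← e.map_sub, hf, hg]; rfl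

lemma conv_eq_of_norm_eq {n : ℕ} {f g : EuclideanSpace ℝ (Fin n) → ℝ} {φ₁ φ₂ : ℝ → ℝ}
    (hrep₁ : ∀ x, f x = φ₁ ‖x‖) (hrep₂ : ∀ x, g x = φ₂ ‖x‖)
    {x y : EuclideanSpace ℝ (Fin n)} (hxy : ‖x‖ = ‖y‖) :
    conv f g x = conv f g y := by
  have hreflect : Submodule.reflection (ℝ ∙ (x - y))ᗮ x = y := Submodule.reflection_sub hxy
  rw [← hreflect, conv_linearIsometryEquiv]
  · simp [hrep₁]
  · simp [hrep₂]

theorem stmt1_general {n : ℕ} (h₁ h₂ : EuclideanSpace ℝ (Fin n) → ℝ)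
    (h₁nn : ∀ x, 0 ≤ h₁ x) (h₁int : Integrable h₁)
    (h₁su : SymmUnimodal h₁)
    (h₂nn : ∀ x, 0 ≤ h₂ x)
    (h₂su : SymmUnimodal h₂) :
    ∃ ψ : ℝ → ℝ, AntitoneOn ψ (Set.Ici 0) ∧
      ∀ x, conv h₁ h₂ x = ψ ‖x‖ := by
  obtain _ | m := n
  · exact ⟨fun _ => conv h₁ h₂ 0, fun _ _ _ _ _ => le_rfl,
      fun x => by rw [Subsingleton.elim x 0]⟩
  obtain ⟨φ₁, hφ₁, hrep₁⟩ := h₁su.exists_antitone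
  obtain ⟨φ₂, hφ₂, hrep₂⟩ := h₂su.exists_antitone
  refine ⟨fun c => conv h₁ h₂ (c • EuclideanSpace.single 0 1),
    antitoneOn_conv_smul_single hφ₁ hφ₂ hrep₁ hrep₂ h₁nn h₂nn h₁int, fun x => ?_⟩
  exact conv_eq_of_norm_eq hrep₁ hrep₂ (by simp [norm_smul])

theorem stmt1 {n : ℕ} (h₁ h₂ : EuclideanSpace ℝ (Fin n) → ℝ)
    (h₁nn : ∀ x, 0 ≤ h₁ x) (h₁int : Integrable h₁)
    (h₁su : SymmUnimodal h₁)
    (h₂nn : ∀ x, 0 ≤ h₂ x) (h₂pdf : ∫ x, h₂ x = 1)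
    (h₂su : SymmUnimodal h₂) :
    ∃ ψ : ℝ → ℝ, AntitoneOn ψ (Set.Ici 0) ∧
      ∀ x, conv h₁ h₂ x = ψ ‖x‖ :=
  stmt1_general h₁ h₂ h₁nn h₁int h₁su h₂nn h₂su
end

section
/- Let h₂ : ℝⁿ → ℝ be a non-negative integrable function that is symmetric unimodal about 0. Then for any fixed radius r > 0, the function x₁ ↦ ∫_{B((x₁,0,…,0), r)} h₂(z) dz is non-increasing in x₁ on [0, ∞), where B(c, r) is the open Euclidean ball of radius r centered at c. -/
/-!
Let `T` be the reflection in the perpendicular bisector of `p` and `q`. It is a measure-preserving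
involution swapping the balls `B(p, r)` and `B(q, r)`, so
`∫_{B(q,r) \ B(p,r)} f = ∫_{B(p,r) \ B(q,r)} f ∘ T`.
On the half-space of points closer to `p` than to `q`, which contains `0` when `‖p‖ ≤ ‖q‖`,
the reflection does not decrease the norm; hence `f ∘ T ≤ f` on `B(p, r) \ B(q, r)` for a
radially non-increasing `f`, and the integral over `B(q, r)` is at most that over `B(p, r)`.
-/

open MeasureTheory

open Metric

theorem setIntegral_le_setIntegral_of_swap {α : Type*} [MeasurableSpace α] {μ : Measure α}
    {T : α → α} (hT : MeasurePreserving T μ μ) (hTe : MeasurableEmbedding T)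
    {f : α → ℝ} (hf : Integrable f μ) {A B : Set α} (hA : MeasurableSet A) (hB : MeasurableSet B)
    (hTA : T ⁻¹' A = B) (hTB : T ⁻¹' B = A) (hfT : ∀ x ∈ A \ B, f (T x) ≤ f x) :
    ∫ x in B, f x ∂μ ≤ ∫ x in A, f x ∂μ := by
  have hswap : ∫ x in B \ A, f x ∂μ = ∫ x in A \ B, f (T x) ∂μ := by
    rw [← hT.setIntegral_preimage_emb hTe, Set.preimage_sdiff, hTA, hTB]
  have hfT_int : Integrable (f ∘ T) μ := (hT.integrable_comp_emb hTe).2 hf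
  calc ∫ x in B, f x ∂μ = ∫ x in B ∩ A, f x ∂μ + ∫ x in B \ A, f x ∂μ :=
        (integral_inter_add_sdiff hA hf.integrableOn).symm
    _ = ∫ x in A ∩ B, f x ∂μ + ∫ x in A \ B, f (T x) ∂μ := by rw [Set.inter_comm, hswap]
    _ ≤ ∫ x in A ∩ B, f x ∂μ + ∫ x in A \ B, f x ∂μ :=
        add_le_add_right
          (setIntegral_mono_on hfT_int.integrableOn hf.integrableOn (hA.diff hB) hfT) _
    _ = ∫ x in A, f x ∂μ := integral_inter_add_sdiff hB hf.integrableOn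

section BisectorReflection

variable {E : Type*} [NormedAddCommGroup E] [InnerProductSpace ℝ E]

noncomputable def bisectorReflection (p q : E) : E ≃ᵢ E :=
  ((IsometryEquiv.subRight (midpoint ℝ p q)).trans
    (ℝ ∙ (q - p))ᗮ.reflection.toIsometryEquiv).trans (IsometryEquiv.addRight (midpoint ℝ p q))

variable (p q z : E)

theorem bisectorReflection_apply :
    bisectorReflection p q z = (ℝ ∙ (q - p))ᗮ.reflection (z - midpoint ℝ p q) + midpoint ℝ p q :=
  rfl

theorem bisectorReflection_apply_eq_sub_smul : bisectorReflection p q z =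
    z - (2 * inner ℝ (q - p) (z - midpoint ℝ p q) / ‖q - p‖ ^ 2) • (q - p) := by
  rw [bisectorReflection_apply, Submodule.reflection_orthogonal_apply,
    Submodule.reflection_singleton_apply]
  simp only [RCLike.ofReal_real_eq_id, id_eq, neg_sub]
  module

theorem bisectorReflection_involutive : Function.Involutive (bisectorReflection p q) := by
  intro z
  simp only [bisectorReflection_apply, add_sub_cancel_right, Submodule.reflection_reflection,
    sub_add_cancel]

theorem bisectorReflection_sub_right :
    bisectorReflection p q z - q = (ℝ ∙ (q - p))ᗮ.reflection (z - p) := by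
  have hmid : midpoint ℝ p q - p = (2⁻¹ : ℝ) • (q - p) := by
    rw [midpoint_eq_smul_add, invOf_eq_inv]; module
  have hR : (ℝ ∙ (q - p))ᗮ.reflection (midpoint ℝ p q - p) = -(midpoint ℝ p q - p) := by
    rw [hmid, map_smul, Submodule.reflection_orthogonalComplement_singleton_eq_neg, smul_neg]
  rw [bisectorReflection_apply, ← sub_add_sub_cancel z (midpoint ℝ p q) p, map_add, hR,
    midpoint_eq_smul_add, invOf_eq_inv]
  module

theorem dist_bisectorReflection_right : dist (bisectorReflection p q z) q = dist z p := by
  rw [dist_eq_norm, dist_eq_norm, bisectorReflection_sub_right, LinearIsometryEquiv.norm_map]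

theorem bisectorReflection_apply_left : bisectorReflection p q p = q := by
  simpa using dist_bisectorReflection_right p q p

theorem bisectorReflection_apply_right : bisectorReflection p q q = p := by
  simpa only [bisectorReflection_apply_left] using bisectorReflection_involutive p q p

theorem dist_bisectorReflection_left : dist (bisectorReflection p q z) p = dist z q := by
  calc dist (bisectorReflection p q z) p
      = dist (bisectorReflection p q z) (bisectorReflection p q q) := by
        rw [bisectorReflection_apply_right]
    _ = dist z q := (bisectorReflection p q).dist_eq z q

theorem norm_bisectorReflection_sq : ‖bisectorReflection p q z‖ ^ 2 =
    ‖z‖ ^ 2 + (‖z - q‖ ^ 2 - ‖z - p‖ ^ 2) * (‖q‖ ^ 2 - ‖p‖ ^ 2) / ‖q - p‖ ^ 2 := by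
  rcases eq_or_ne p q with rfl | hpq
  · simp [bisectorReflection_apply_eq_sub_smul]
  have hN : ‖q - p‖ ≠ 0 := norm_ne_zero_iff.2 (sub_ne_zero.2 hpq.symm)
  have hmid : ‖q‖ ^ 2 - ‖p‖ ^ 2 = 2 * inner ℝ (q - p) (midpoint ℝ p q) := by
    rw [midpoint_eq_smul_add, invOf_eq_inv, inner_smul_right, inner_add_right, inner_sub_left,
      inner_sub_left, real_inner_self_eq_norm_sq, real_inner_self_eq_norm_sq, real_inner_comm p q]
    ring
  have hdiff : ‖z - q‖ ^ 2 - ‖z - p‖ ^ 2 = ‖q‖ ^ 2 - ‖p‖ ^ 2 - 2 * inner ℝ (q - p) z := by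
    rw [norm_sub_sq_real, norm_sub_sq_real, inner_sub_left, real_inner_comm z q,
      real_inner_comm z p]
    ring
  rw [bisectorReflection_apply_eq_sub_smul, norm_sub_sq_real, norm_smul, inner_smul_right,
    inner_sub_right, hdiff, hmid, real_inner_comm (q - p) z, Real.norm_eq_abs, mul_pow, sq_abs]
  field_simp
  ring

variable {p q z} in
theorem norm_le_norm_bisectorReflection (hpq : ‖p‖ ≤ ‖q‖) (hz : dist z p ≤ dist z q) :
    ‖z‖ ≤ ‖bisectorReflection p q z‖ := by
  have hz' : ‖z - p‖ ^ 2 ≤ ‖z - q‖ ^ 2 := by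
    rw [← dist_eq_norm, ← dist_eq_norm]; gcongr
  have hpq' : ‖p‖ ^ 2 ≤ ‖q‖ ^ 2 := by gcongr
  have hcorr : 0 ≤ (‖z - q‖ ^ 2 - ‖z - p‖ ^ 2) * (‖q‖ ^ 2 - ‖p‖ ^ 2) / ‖q - p‖ ^ 2 :=
    div_nonneg (mul_nonneg (sub_nonneg.2 hz') (sub_nonneg.2 hpq')) (sq_nonneg _)
  apply le_of_sq_le_sq _ (norm_nonneg _)
  linarith [norm_bisectorReflection_sq p q z]

variable [FiniteDimensional ℝ E] [MeasurableSpace E] [BorelSpace E]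

theorem measurePreserving_bisectorReflection : MeasurePreserving (bisectorReflection p q) := by
  have hR := LinearIsometryEquiv.measurePreserving (ℝ ∙ (q - p))ᗮ.reflection
  exact (measurePreserving_add_right volume (midpoint ℝ p q)).comp
    (hR.comp (measurePreserving_sub_right volume (midpoint ℝ p q)))

end BisectorReflection

theorem setIntegral_ball_le_of_norm_le {E : Type*} [NormedAddCommGroup E] [InnerProductSpace ℝ E]
    [FiniteDimensional ℝ E] [MeasurableSpace E] [BorelSpace E] {f : E → ℝ} (hf : Integrable f)
    (hf_anti : ∀ x y : E, ‖x‖ ≤ ‖y‖ → f y ≤ f x) {p q : E} (hpq : ‖p‖ ≤ ‖q‖) (r : ℝ) :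
    ∫ z in ball q r, f z ≤ ∫ z in ball p r, f z := by
  refine setIntegral_le_setIntegral_of_swap (measurePreserving_bisectorReflection p q)
    (bisectorReflection p q).toHomeomorph.measurableEmbedding hf measurableSet_ball
    measurableSet_ball ?_ ?_ fun z hz ↦ hf_anti _ _ (norm_le_norm_bisectorReflection hpq ?_)
  · ext z; simp only [Set.mem_preimage, mem_ball, dist_bisectorReflection_left]
  · ext z; simp only [Set.mem_preimage, mem_ball, dist_bisectorReflection_right]
  · simp only [Set.mem_sdiff, mem_ball, not_lt] at hz
    linarith

theorem SymmUnimodal.apply_le_of_norm_le {n : ℕ} {f : EuclideanSpace ℝ (Fin n) → ℝ}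
    (hf : SymmUnimodal f) {x y : EuclideanSpace ℝ (Fin n)} (hxy : ‖x‖ ≤ ‖y‖) : f y ≤ f x := by
  obtain ⟨φ, hφ, hfφ⟩ := hf
  rw [hfφ, hfφ]
  exact hφ (norm_nonneg x) ((norm_nonneg x).trans hxy) hxy

theorem stmt2_general {n : ℕ} (h₂ : EuclideanSpace ℝ (Fin (n + 1)) → ℝ)
    (hint : Integrable h₂)
    (hsu : SymmUnimodal h₂) (r : ℝ) :
    AntitoneOn
      (fun x₁ : ℝ =>
        ∫ z in Metric.ball (EuclideanSpace.single (0 : Fin (n + 1)) x₁) r, h₂ z)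
      (Set.Ici 0) := by
  intro a (ha : 0 ≤ a) b _ hab
  refine setIntegral_ball_le_of_norm_le hint (fun x y ↦ hsu.apply_le_of_norm_le) ?_ r
  simpa [abs_of_nonneg ha, abs_of_nonneg (ha.trans hab)] using hab

theorem stmt2 {n : ℕ} (h₂ : EuclideanSpace ℝ (Fin (n + 1)) → ℝ)
    (hnn : ∀ x, 0 ≤ h₂ x) (hint : Integrable h₂)
    (hsu : SymmUnimodal h₂) (r : ℝ) (hr : 0 < r) :
    AntitoneOn
      (fun x₁ : ℝ =>
        ∫ z in Metric.ball (EuclideanSpace.single (0 : Fin (n + 1)) x₁) r, h₂ z)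
      (Set.Ici 0) :=
  stmt2_general h₂ hint hsu r
end

section
/- Let Z be a real-valued random variable whose distribution is symmetric (P(Z ∈ A) = P(−Z ∈ A)) and unimodal in the sense that P(Z = k) is non-increasing in |k| for integer-valued Z. Let ξ be a probability mass function on ℤ that is almost symmetric and unimodal (a.s.u.) about a point a ∈ ℤ. Then the convolution (ξ * μ)(x) = Σ_{x'} ξ(x') μ(x − x'), where μ is the (even, a.s.u.) pmf of Z, is a.s.u. about a. -/
open scoped BigOperators

/-- Spiral enumeration of ℤ: sp 1 = 0, sp 2 = 1, sp 3 = -1, sp 4 = 2, sp 5 = -2, … -/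
def sp (k : ℕ) : ℤ := if k % 2 = 0 then ((k / 2 : ℕ) : ℤ) else -((k / 2 : ℕ) : ℤ)

/-- `f` is almost symmetric and unimodal (a.s.u.) about `a`: its values, read in the
spiral order `f a, f (a+1), f (a-1), f (a+2), f (a-2), …` (or the mirrored order),
form a non-increasing sequence. -/
def ASU (f : ℤ → ℝ) (a : ℤ) : Prop :=
  Antitone (fun n : ℕ => f (a + sp (n + 1))) ∨
  Antitone (fun n : ℕ => f (a - sp (n + 1)))

/-- `Maj f g` (`f ≺ g`): for every m, the sum of any m values of f is at most the
sum of some m values of g, i.e. every partial sum of the m largest values of f is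
at most that of g. -/
def Maj (f g : ℤ → ℝ) : Prop :=
  ∀ A : Finset ℤ, ∃ B : Finset ℤ, B.card = A.card ∧ ∑ x ∈ A, f x ≤ ∑ x ∈ B, g x

/-- A probability mass function on ℤ. -/
def IsPmf (f : ℤ → ℝ) : Prop := (∀ x, 0 ≤ f x) ∧ HasSum f 1

/-!
Enumerate ℤ in spiral order `tₙ = sp (n + 1)` and put `cₙ = ξ (a + tₙ)`, a non-increasing summable
sequence. Then `(ξ * μ) (a + tₘ) = ∑ₙ cₙ μ (tₘ - tₙ)`, and by Abel summation it suffices that the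
partial sums `∑_{n<N} μ (tₘ - tₙ)` do not increase from `m` to `m + 1`. The first `N` spiral points
form an interval, so these partial sums are the masses of windows of length `N`; since `μ` is even
and unimodal, the mass of a window decreases as its centre moves away from `0`, and the centre of
the window for `tₘ₊₁` is never closer to `0` than the one for `tₘ`. The mirrored case follows by
reflecting `ξ`.
-/

open Finset

lemma sp_two_mul (p : ℕ) : sp (2 * p) = p := by simp [sp]

lemma sp_two_mul_add_one (p : ℕ) : sp (2 * p + 1) = -p := by simp [sp, Nat.add_mod]; omega

/-- Mathlib's enumeration `0, -1, 1, -2, 2, …` of `ℤ`, negated. -/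
def spEquiv : ℕ ≃ ℤ := Equiv.intEquivNat.symm.trans (Equiv.neg ℤ)

lemma spEquiv_apply (n : ℕ) : spEquiv n = sp (n + 1) := by
  rw [spEquiv, Equiv.trans_apply, Equiv.neg_apply, neg_eq_iff_eq_neg, Equiv.symm_apply_eq]
  obtain ⟨p, rfl | rfl⟩ := Nat.even_or_odd' n
  · rw [sp_two_mul_add_one, neg_neg]; rfl
  · rw [show 2 * p + 1 + 1 = 2 * (p + 1) by ring, sp_two_mul]; rfl

lemma sum_range_sp {M : Type*} [AddCommMonoid M] (f : ℤ → M) (N : ℕ) :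
    ∑ n ∈ range N, f (sp (n + 1)) = ∑ i ∈ range N, f ((N / 2 : ℕ) - i) := by
  induction N with
  | zero => rfl
  | succ N ih =>
    obtain ⟨p, rfl | rfl⟩ := Nat.even_or_odd' N
    · rw [sum_range_succ, sum_range_succ, ih, sp_two_mul_add_one,
        show (2 * p + 1) / 2 = 2 * p / 2 by omega]
      congr 2; push_cast; omega
    · rw [sum_range_succ, ih, sum_range_succ' _ (2 * p + 1),
        show 2 * p + 1 + 1 = 2 * (p + 1) by ring, sp_two_mul,
        show 2 * (p + 1) / 2 = (2 * p + 1) / 2 + 1 by omega]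
      congr 1
      · exact sum_congr rfl fun i _ => by push_cast; ring_nf
      · rw [show (2 * p + 1) / 2 = p by omega]; push_cast; ring_nf

lemma sum_range_mul_le_of_antitone {c f g : ℕ → ℝ} (hc : Antitone c) (hc0 : ∀ n, 0 ≤ c n)
    (hfg : ∀ N, ∑ n ∈ range N, f n ≤ ∑ n ∈ range N, g n) (N : ℕ) :
    ∑ n ∈ range N, c n * f n ≤ ∑ n ∈ range N, c n * g n := by
  have hd N : 0 ≤ ∑ n ∈ range N, (g n - f n) := by
    rw [sum_sub_distrib, sub_nonneg]; exact hfg N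
  have h := sum_range_by_parts c (fun n => g n - f n) N
  simp only [smul_eq_mul] at h
  rw [← sub_nonneg, ← sum_sub_distrib]
  simp only [← mul_sub]
  rw [h]
  refine sub_nonneg_of_le ((sum_nonpos fun i _ => ?_).trans (mul_nonneg (hc0 _) (hd N)))
  exact mul_nonpos_of_nonpos_of_nonneg (sub_nonpos.mpr (hc i.le_succ)) (hd _)

lemma tsum_mul_le_of_antitone {c f g : ℕ → ℝ} (hc : Antitone c) (hc0 : ∀ n, 0 ≤ c n)
    (hf : Summable fun n => c n * f n) (hg : Summable fun n => c n * g n)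
    (hfg : ∀ N, ∑ n ∈ range N, f n ≤ ∑ n ∈ range N, g n) :
    ∑' n, c n * f n ≤ ∑' n, c n * g n :=
  le_of_tendsto_of_tendsto' hf.hasSum.tendsto_sum_nat hg.hasSum.tendsto_sum_nat
    (sum_range_mul_le_of_antitone hc hc0 hfg)

def windowSum (μ : ℤ → ℝ) (x : ℤ) (k : ℕ) : ℝ := ∑ i ∈ range k, μ (x + i)

lemma windowSum_one_sub_sub {μ : ℤ → ℝ} (heven : ∀ x, μ (-x) = μ x) (x : ℤ) (k : ℕ) :
    windowSum μ (1 - k - x) k = windowSum μ x k := by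
  rw [windowSum, ← sum_range_reflect]
  refine sum_congr rfl fun i hi => ?_
  rw [← heven]
  congr 1
  simp only [mem_range] at hi
  omega

lemma windowSum_add_one_add (μ : ℤ → ℝ) (x : ℤ) (k : ℕ) :
    windowSum μ (x + 1) k + μ x = windowSum μ x k + μ (x + k) := by
  rw [windowSum, windowSum, ← sum_range_succ (fun i : ℕ => μ (x + i)), sum_range_succ']
  simp only [Nat.cast_add, Nat.cast_one, Nat.cast_zero, add_zero, add_assoc, add_comm (1 : ℤ)]

lemma sum_range_sub_sp (μ : ℤ → ℝ) (s : ℤ) (N : ℕ) :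
    ∑ n ∈ range N, μ (s - sp (n + 1)) = windowSum μ (s - (N / 2 : ℕ)) N := by
  rw [sum_range_sp fun t => μ (s - t)]
  exact sum_congr rfl fun i _ => by ring_nf

section SymmetricUnimodal

variable {μ : ℤ → ℝ} (hμ : ∀ u v : ℤ, |u| ≤ |v| → μ v ≤ μ u)
include hμ

lemma windowSum_le_of_le {k : ℕ} {x y : ℤ} (hx : 0 ≤ 2 * x + k - 1) (hxy : x ≤ y) :
    windowSum μ y k ≤ windowSum μ x k := by
  induction y, hxy using Int.leInduction with
  | base => rfl
  | succ y hxy ih =>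
    have hstep := windowSum_add_one_add μ y k
    have hend := hμ y (y + k) ((abs_le.mpr ⟨by omega, by omega⟩).trans (le_abs_self _))
    linarith

/-- `2 * x + k - 1` is twice the centre of the window `[x, x + k - 1]`. -/
lemma windowSum_le_of_abs_le {k : ℕ} {x y : ℤ} (hxy : |2 * x + k - 1| ≤ |2 * y + k - 1|) :
    windowSum μ y k ≤ windowSum μ x k := by
  have heven x : μ (-x) = μ x := le_antisymm (hμ _ _ (abs_neg x).ge) (hμ _ _ (abs_neg x).le)
  have hmax x : windowSum μ (max x (1 - k - x)) k = windowSum μ x k := by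
    rcases max_choice x (1 - k - x) with h | h <;> rw [h]
    exact windowSum_one_sub_sub heven x k
  rw [← hmax x, ← hmax y]
  apply windowSum_le_of_le hμ (by omega)
  rcases abs_cases (2 * x + k - 1) with hx | hx <;>
    rcases abs_cases (2 * y + k - 1) with hy | hy <;> omega

lemma windowSum_sp_succ_le (m N : ℕ) :
    windowSum μ (sp (m + 2) - (N / 2 : ℕ)) N ≤ windowSum μ (sp (m + 1) - (N / 2 : ℕ)) N := by
  apply windowSum_le_of_abs_le hμ
  obtain ⟨q, rfl | rfl⟩ := Nat.even_or_odd' m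
  · rw [sp_two_mul_add_one, show 2 * q + 2 = 2 * (q + 1) by ring, sp_two_mul]
    exact (abs_le.mpr ⟨by omega, by omega⟩).trans (le_abs_self _)
  · rw [show 2 * q + 1 + 1 = 2 * (q + 1) by ring, sp_two_mul,
      show 2 * q + 1 + 2 = 2 * (q + 1) + 1 by ring, sp_two_mul_add_one]
    exact (abs_le.mpr ⟨by omega, by omega⟩).trans (neg_le_abs _)

variable (hμ0 : ∀ x, 0 ≤ μ x)
include hμ0

theorem antitone_tsum_mul_sub_sp {c : ℕ → ℝ} (hc : Antitone c) (hcs : Summable c) :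
    Antitone fun m : ℕ => ∑' n, c n * μ (sp (m + 1) - sp (n + 1)) := by
  have hc0 n : 0 ≤ c n := hc.le_of_tendsto hcs.tendsto_atTop_zero n
  have hsum (s : ℤ) : Summable fun n => c n * μ (s - sp (n + 1)) :=
    (hcs.mul_right (μ 0)).of_nonneg_of_le (fun n => mul_nonneg (hc0 n) (hμ0 _))
      fun n => mul_le_mul_of_nonneg_left (hμ _ _ (by simp)) (hc0 n)
  refine antitone_nat_of_succ_le fun m =>
    tsum_mul_le_of_antitone hc hc0 (hsum _) (hsum _) fun N => ?_
  simp only [sum_range_sub_sp]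
  exact windowSum_sp_succ_le hμ m N

theorem antitone_tsum_mul_add_sp_sub {ξ : ℤ → ℝ} {a : ℤ}
    (hξ : Antitone fun n : ℕ => ξ (a + sp (n + 1))) (hξs : Summable ξ) :
    Antitone fun n : ℕ => ∑' x, ξ x * μ (a + sp (n + 1) - x) := by
  let e := spEquiv.trans (Equiv.addLeft a)
  have he n : e n = a + sp (n + 1) := by simp [e, spEquiv_apply]
  have hcs : Summable fun n => ξ (a + sp (n + 1)) := by
    simpa [Function.comp_def, he] using e.summable_iff.mpr hξs
  convert antitone_tsum_mul_sub_sp hμ hμ0 hξ hcs using 2 with m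
  rw [← e.tsum_eq]
  simp only [he, add_sub_add_left_eq_sub]

end SymmetricUnimodal

lemma ASU.apply_le_of_abs_le {μ : ℤ → ℝ} (h : ASU μ 0) (heven : ∀ k, μ k = μ (-k)) {u v : ℤ}
    (huv : |u| ≤ |v|) : μ v ≤ μ u := by
  have hnat {p q : ℕ} (hpq : p ≤ q) : μ q ≤ μ p := by
    have hmono : 2 * p ≤ 2 * q := by omega
    rcases h with h | h <;> simpa [sp_two_mul_add_one, ← heven] using h hmono
  have habs (x : ℤ) : μ x = μ x.natAbs := by
    rcases abs_choice x with hx | hx <;> rw [Int.natCast_natAbs, hx]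
    exact heven x
  rw [habs u, habs v]
  exact hnat (Int.natAbs_le_iff_sq_le.mpr (sq_le_sq.mpr huv))

theorem stmt3 (μ ξ : ℤ → ℝ) (a : ℤ)
    (hμ : IsPmf μ) (hμeven : ∀ k, μ k = μ (-k)) (hμasu : ASU μ 0)
    (hξ : IsPmf ξ) (hξasu : ASU ξ a) :
    ASU (fun x => ∑' x' : ℤ, ξ x' * μ (x - x')) a := by
  have hμunimodal (u v : ℤ) : |u| ≤ |v| → μ v ≤ μ u := hμasu.apply_le_of_abs_le hμeven
  rcases hξasu with h | h
  · exact Or.inl (antitone_tsum_mul_add_sp_sub hμunimodal hμ.1 h hξ.2.summable)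
  · refine Or.inr ?_
    have h' : Antitone fun n : ℕ => ξ (-(-a + sp (n + 1))) := by simpa [neg_add_eq_sub] using h
    convert antitone_tsum_mul_add_sp_sub (ξ := fun x => ξ (-x)) hμunimodal hμ.1 h'
      (hξ.2.summable.comp_injective neg_injective) using 2 with n
    rw [← (Equiv.neg ℤ).tsum_eq]
    refine tsum_congr fun x => ?_
    simp only [Equiv.neg_apply, neg_neg, hμeven (a - sp (n + 1) - x)]
    ring_nf
end

section
/- Let ρ : ℤ × X → [0,∞) for a finite set X ⊆ ℤ, with ρ(x,a) = g(|x−a|) for some non-decreasing g with g(0) = 0. Let θ be a pmf on ℤ that is a.s.u. about some point b ∈ X. Then the minimum over a ∈ X of Σ_x ρ(x,a) θ(x) is attained at a = b, and equals the inner product of the non-decreasing rearrangement of the distortion values with the non-increasing rearrangement of θ. -/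
open scoped BigOperators

/-! Around any centre `a`, enumerate ℤ by the spiral `a, a + 1, a - 1, a + 2, a - 2, …`; along it
the distortion is `c n = g ((n + 1) / 2)`, the same nondecreasing sequence for every `a`.
Being a.s.u. about `b` says that θ read along the spiral about `b` (or its mirror image) is
nonincreasing, so its partial sums dominate those of θ read along any other enumeration.
Writing `c n = ∑_{k < n} (c (k + 1) - c k)`, the expected distortion becomes
`∑_k (c (k + 1) - c k) · (mass beyond the k-th point)`, and every such tail mass is smallest for
the spiral about `b`. -/

open Finset
open scoped ENNReal

def spiralEquiv : ℕ ≃ ℤ where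
  toFun n := sp (n + 1)
  invFun z := if 0 < z then (2 * z - 1).toNat else (-(2 * z)).toNat
  left_inv n := by simp only [sp]; split_ifs <;> omega
  right_inv z := by simp only [sp]; split_ifs <;> push_cast <;> omega

theorem natAbs_spiralEquiv (n : ℕ) : (spiralEquiv n).natAbs = (n + 1) / 2 := by
  change (sp (n + 1)).natAbs = _
  simp only [sp]; split_ifs <;> omega

theorem natAbs_spiralEquiv_addLeft_sub (a : ℤ) (n : ℕ) :
    ((spiralEquiv.trans (Equiv.addLeft a)) n - a).natAbs = (n + 1) / 2 := by
  simp [← natAbs_spiralEquiv]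

theorem natAbs_spiralEquiv_subLeft_sub (a : ℤ) (n : ℕ) :
    ((spiralEquiv.trans (Equiv.subLeft a)) n - a).natAbs = (n + 1) / 2 := by
  simp [← natAbs_spiralEquiv]

theorem Antitone.sum_le_sum_range {M : Type*} [AddCommMonoid M] [PartialOrder M]
    [IsOrderedAddMonoid M] {p : ℕ → M} (hp : Antitone p) (s : Finset ℕ) :
    ∑ n ∈ s, p n ≤ ∑ n ∈ range #s, p n := by
  set r := range #s
  calc ∑ n ∈ s, p n ≤ ∑ n ∈ s ∩ r, p n + #(s \ r) • p #s := by
        rw [← sum_inter_add_sum_sdiff s r]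
        gcongr
        refine sum_le_card_nsmul _ _ _ fun n hn => hp ?_
        simpa [r] using (mem_sdiff.mp hn).2
    _ = ∑ n ∈ r ∩ s, p n + #(r \ s) • p #s := by
        rw [inter_comm, card_sdiff_comm (card_range _).symm]
    _ ≤ ∑ n ∈ r, p n := by
        rw [← sum_inter_add_sum_sdiff r s]
        gcongr
        exact card_nsmul_le_sum _ _ _ fun n hn => hp (mem_range.mp (mem_sdiff.mp hn).1).le

theorem sum_range_le_sum_range_of_antitone_comp {α M : Type*} [AddCommMonoid M] [PartialOrder M]
    [IsOrderedAddMonoid M] {f : α → M} {σ : ℕ ≃ α} (hf : Antitone (f ∘ σ)) (τ : ℕ ≃ α)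
    (k : ℕ) : ∑ n ∈ range k, f (τ n) ≤ ∑ n ∈ range k, f (σ n) := by
  have h := hf.sum_le_sum_range ((range k).map (τ.trans σ.symm).toEmbedding)
  simpa [sum_map] using h

namespace ENNReal

theorem sum_range_tsub {c : ℕ → ℝ≥0∞} (hc : Monotone c) (hc0 : c 0 = 0) (n : ℕ) :
    ∑ k ∈ range n, (c (k + 1) - c k) = c n := by
  induction n with
  | zero => simp [hc0]
  | succ n ih => rw [sum_range_succ, ih, add_tsub_cancel_of_le (hc n.le_succ)]

theorem tsum_mul_eq_tsum_tsub_mul_tsum_ite {c : ℕ → ℝ≥0∞} (hc : Monotone c) (hc0 : c 0 = 0)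
    (p : ℕ → ℝ≥0∞) :
    ∑' n, c n * p n = ∑' k, (c (k + 1) - c k) * ∑' n, if k < n then p n else 0 := by
  have hc_eq : ∀ n, c n = ∑' k, if k < n then c (k + 1) - c k else 0 := fun n => by
    rw [tsum_eq_sum (s := range n) fun k hk => if_neg (by simpa using hk),
      sum_ite_of_true fun k hk => mem_range.mp hk, sum_range_tsub hc hc0]
  calc ∑' n, c n * p n = ∑' n, ∑' k, if k < n then (c (k + 1) - c k) * p n else 0 := by
        refine tsum_congr fun n => ?_
        rw [hc_eq n, ← ENNReal.tsum_mul_right]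
        simp only [ite_mul, zero_mul]
    _ = _ := by
        rw [ENNReal.tsum_comm]
        refine tsum_congr fun k => ?_
        rw [← ENNReal.tsum_mul_left]
        simp only [mul_ite, mul_zero]

theorem tsum_eq_sum_range_add_tsum_ite (p : ℕ → ℝ≥0∞) (k : ℕ) :
    ∑' n, p n = ∑ n ∈ range (k + 1), p n + ∑' n, if k < n then p n else 0 := by
  have head : ∑ n ∈ range (k + 1), p n = ∑' n, if n ≤ k then p n else 0 := by
    rw [tsum_eq_sum (s := range (k + 1)) fun n hn => if_neg (by simpa [Nat.lt_succ_iff] using hn),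
      sum_ite_of_true fun n hn => Nat.lt_succ_iff.mp (mem_range.mp hn)]
  rw [head, ← ENNReal.tsum_add]
  refine tsum_congr fun n => ?_
  split_ifs <;> first | omega | simp

theorem tsum_ite_le_tsum_ite_of_sum_range_le {p q : ℕ → ℝ≥0∞} (htot : ∑' n, p n = ∑' n, q n)
    (hq : ∑' n, q n ≠ ∞) (hhead : ∀ k, ∑ n ∈ range k, q n ≤ ∑ n ∈ range k, p n) (k : ℕ) :
    (∑' n, if k < n then p n else 0) ≤ ∑' n, if k < n then q n else 0 := by
  have hfin : ∑ n ∈ range (k + 1), q n ≠ ∞ :=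
    ne_top_of_le_ne_top hq ((tsum_eq_sum_range_add_tsum_ite q k).symm ▸ le_self_add)
  refine (ENNReal.add_le_add_iff_left hfin).mp ?_
  calc _ ≤ ∑ n ∈ range (k + 1), p n + ∑' n, if k < n then p n else 0 :=
        add_le_add (hhead _) le_rfl
    _ = ∑' n, q n := by rw [← tsum_eq_sum_range_add_tsum_ite, htot]
    _ = _ := tsum_eq_sum_range_add_tsum_ite q k

theorem tsum_mul_le_tsum_mul_of_sum_range_le {c p q : ℕ → ℝ≥0∞} (hc : Monotone c)
    (hc0 : c 0 = 0) (htot : ∑' n, p n = ∑' n, q n) (hq : ∑' n, q n ≠ ∞)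
    (hhead : ∀ k, ∑ n ∈ range k, q n ≤ ∑ n ∈ range k, p n) :
    ∑' n, c n * p n ≤ ∑' n, c n * q n := by
  rw [tsum_mul_eq_tsum_tsub_mul_tsum_ite hc hc0, tsum_mul_eq_tsum_tsub_mul_tsum_ite hc hc0]
  refine ENNReal.tsum_le_tsum fun k => ?_
  gcongr _ * ?_
  exact tsum_ite_le_tsum_ite_of_sum_range_le htot hq hhead k

end ENNReal

theorem Real.tsum_mul_le_tsum_mul_of_sum_range_le {c p q : ℕ → ℝ} {s : ℝ} (hc : Monotone c)
    (hc0 : c 0 = 0) (hp0 : ∀ n, 0 ≤ p n) (hq0 : ∀ n, 0 ≤ q n) (hp : HasSum p s)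
    (hq : HasSum q s) (hhead : ∀ k, ∑ n ∈ range k, q n ≤ ∑ n ∈ range k, p n)
    (hcq : Summable fun n => c n * q n) :
    ∑' n, c n * p n ≤ ∑' n, c n * q n := by
  have hc_nonneg : ∀ n, 0 ≤ c n := fun n => hc0 ▸ hc n.zero_le
  have hcq_nonneg : 0 ≤ ∑' n, c n * q n := tsum_nonneg fun n => mul_nonneg (hc_nonneg n) (hq0 n)
  by_cases hcp : Summable fun n => c n * p n
  swap
  · rwa [tsum_eq_zero_of_not_summable hcp]
  have key := ENNReal.tsum_mul_le_tsum_mul_of_sum_range_le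
    (c := fun n => .ofReal (c n)) (p := fun n => .ofReal (p n)) (q := fun n => .ofReal (q n))
    (fun m n h => ENNReal.ofReal_le_ofReal (hc h)) (by simp [hc0])
    (by rw [← ENNReal.ofReal_tsum_of_nonneg hp0 hp.summable,
      ← ENNReal.ofReal_tsum_of_nonneg hq0 hq.summable, hp.tsum_eq, hq.tsum_eq])
    (by rw [← ENNReal.ofReal_tsum_of_nonneg hq0 hq.summable]; exact ENNReal.ofReal_ne_top)
    (fun k => by
      rw [← ENNReal.ofReal_sum_of_nonneg fun n _ => hp0 n,
        ← ENNReal.ofReal_sum_of_nonneg fun n _ => hq0 n]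
      exact ENNReal.ofReal_le_ofReal (hhead k))
  simp only [← ENNReal.ofReal_mul (hc_nonneg _)] at key
  rwa [← ENNReal.ofReal_tsum_of_nonneg (fun n => mul_nonneg (hc_nonneg n) (hp0 n)) hcp,
    ← ENNReal.ofReal_tsum_of_nonneg (fun n => mul_nonneg (hc_nonneg n) (hq0 n)) hcq,
    ENNReal.ofReal_le_ofReal_iff hcq_nonneg] at key

section Enumeration

variable (g : ℕ → ℝ) (θ : ℤ → ℝ) {a : ℤ} {e : ℕ ≃ ℤ}

theorem tsum_natAbs_sub_mul_eq (he : ∀ n, (e n - a).natAbs = (n + 1) / 2) :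
    ∑' x, g (x - a).natAbs * θ x = ∑' n, g ((n + 1) / 2) * θ (e n) := by
  rw [← e.tsum_eq]
  simp only [he]

theorem summable_natAbs_sub_mul_iff (he : ∀ n, (e n - a).natAbs = (n + 1) / 2) :
    (Summable fun x => g (x - a).natAbs * θ x) ↔ Summable fun n => g ((n + 1) / 2) * θ (e n) := by
  rw [← e.summable_iff]
  simp only [Function.comp_def, he]

end Enumeration

theorem ASU.exists_equiv_antitone {θ : ℤ → ℝ} {b : ℤ} (h : ASU θ b) :
    ∃ e : ℕ ≃ ℤ, (∀ n, (e n - b).natAbs = (n + 1) / 2) ∧ Antitone (θ ∘ e) := by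
  rcases h with h | h
  · exact ⟨_, natAbs_spiralEquiv_addLeft_sub b, h⟩
  · exact ⟨_, natAbs_spiralEquiv_subLeft_sub b, h⟩

theorem stmt9_general (g : ℕ → ℝ) (hg : Monotone g) (hg0 : g 0 = 0)
    (X : Finset ℤ) (b : ℤ)
    (θ : ℤ → ℝ) (hθ : IsPmf θ) (hasu : ASU θ b)
    (hsumm : ∀ a : ℤ, Summable (fun x : ℤ => g (x - a).natAbs * θ x)) :
    (∀ a ∈ X, ∑' x : ℤ, g (x - b).natAbs * θ x ≤ ∑' x : ℤ, g (x - a).natAbs * θ x) ∧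
    ∑' x : ℤ, g (x - b).natAbs * θ x =
      ∑' n : ℕ, g (sp (n + 1)).natAbs * θ (b + sp (n + 1)) := by
  obtain ⟨hθ0, hθ1⟩ := hθ
  obtain ⟨e, he, hanti⟩ := hasu.exists_equiv_antitone
  refine ⟨fun a _ => ?_, ?_⟩
  · let ea := spiralEquiv.trans (Equiv.addLeft a)
    have hea := natAbs_spiralEquiv_addLeft_sub a
    rw [tsum_natAbs_sub_mul_eq g θ he, tsum_natAbs_sub_mul_eq g θ hea]
    exact Real.tsum_mul_le_tsum_mul_of_sum_range_le
      (fun m n h => hg (Nat.div_le_div_right (by omega))) hg0 (fun n => hθ0 _) (fun n => hθ0 _)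
      (e.hasSum_iff.mpr hθ1) (ea.hasSum_iff.mpr hθ1)
      (sum_range_le_sum_range_of_antitone_comp hanti ea)
      ((summable_natAbs_sub_mul_iff g θ hea).mp (hsumm a))
  · rw [tsum_natAbs_sub_mul_eq g θ (natAbs_spiralEquiv_addLeft_sub b)]
    exact tsum_congr fun n => by rw [← natAbs_spiralEquiv]; rfl

theorem stmt9 (g : ℕ → ℝ) (hg : Monotone g) (hg0 : g 0 = 0) (hgnn : ∀ k, 0 ≤ g k)
    (X : Finset ℤ) (b : ℤ) (hb : b ∈ X)
    (θ : ℤ → ℝ) (hθ : IsPmf θ) (hasu : ASU θ b)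
    (hsumm : ∀ a : ℤ, Summable (fun x : ℤ => g (x - a).natAbs * θ x)) :
    (∀ a ∈ X, ∑' x : ℤ, g (x - b).natAbs * θ x ≤ ∑' x : ℤ, g (x - a).natAbs * θ x) ∧
    ∑' x : ℤ, g (x - b).natAbs * θ x =
      ∑' n : ℕ, g (sp (n + 1)).natAbs * θ (b + sp (n + 1)) :=
  stmt9_general g hg hg0 X b θ hθ hasu hsumm
end

section
/- Let θ, θ̃ be pmfs on ℤ with θ ≺ θ̃ and θ̃ a.s.u. about some b ∈ X, where X ⊆ ℤ is finite and contains b. Let ρ(x,a) = g(|x−a|) with g non-decreasing and g(0)=0. Then min_{a∈X} Σ_x ρ(x,a) θ̃(x) ≤ min_{a∈X} Σ_x ρ(x,a) θ(x). -/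
open scoped BigOperators

/-! The expected distortion at `a` is a layer-cake sum
`∑ j, (g (j + 1) - g j) * (1 - θ [a - j, a + j])`, so it suffices to compare window masses.
By majorization the `θ`-mass of the window `[a - j, a + j]` is at most the `θ̃`-mass of some
`2 j + 1` points, and since `θ̃` is a.s.u. about `b` its values read along the spiral around `b`
decrease, so no `2 j + 1` points carry more `θ̃`-mass than `[b - j, b + j]`. Hence the
distortion of `θ̃` at `b` is at most that of `θ` at every `a`. -/

open Finset
open scoped ENNReal

lemma sp_succ_injective : Function.Injective fun n : ℕ => sp (n + 1) := by
  intro m n h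
  simp only [sp] at h
  split_ifs at h <;> omega

lemma sp_succ_surjective : Function.Surjective fun n : ℕ => sp (n + 1) := by
  intro z
  rcases lt_or_ge 0 z with hz | hz
  · exact ⟨2 * z.toNat - 1, by simp only [sp]; split_ifs <;> omega⟩
  · exact ⟨2 * (-z).toNat, by simp only [sp]; split_ifs <;> omega⟩

noncomputable def spiral : ℕ ≃ ℤ :=
  Equiv.ofBijective (fun n => sp (n + 1)) ⟨sp_succ_injective, sp_succ_surjective⟩

lemma spiral_apply (n : ℕ) : spiral n = sp (n + 1) := rfl

lemma natAbs_spiral (n : ℕ) : (spiral n).natAbs = (n + 1) / 2 := by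
  simp only [spiral_apply, sp]
  split_ifs <;> omega

lemma ENNReal.ofReal_tsum_le_tsum_ofReal {α : Type*} {f : α → ℝ} (hf : ∀ x, 0 ≤ f x) :
    ENNReal.ofReal (∑' x, f x) ≤ ∑' x, ENNReal.ofReal (f x) := by
  by_cases hs : Summable f
  · exact (ENNReal.ofReal_tsum_of_nonneg hf hs).le
  · simp [tsum_eq_zero_of_not_summable hs]

section Rearrangement

variable {M : Type*} [AddCommMonoid M] [PartialOrder M] [IsOrderedAddMonoid M]

lemma Finset.sum_le_sum_range_card_of_antitone {c : ℕ → M} (hc : Antitone c) (S : Finset ℕ) :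
    ∑ n ∈ S, c n ≤ ∑ n ∈ range #S, c n := by
  classical
  induction S using Finset.induction_on_max with
  | empty => simp
  | insert m S hlt ih =>
    have hm : m ∉ S := fun h => lt_irrefl m (hlt m h)
    have hcard : #S ≤ m := by
      simpa using card_le_card (fun x hx => mem_range.2 (hlt x hx) : S ⊆ range m)
    rw [sum_insert hm, card_insert_of_notMem hm, sum_range_succ, add_comm]
    exact add_le_add ih (hc hcard)

lemma Finset.sum_le_sum_range_card_of_antitone_comp {α : Type*} (e : ℕ ≃ α) {f : α → M}
    (hf : Antitone (f ∘ e)) (B : Finset α) :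
    ∑ x ∈ B, f x ≤ ∑ n ∈ range #B, f (e n) := by
  calc ∑ x ∈ B, f x = ∑ n ∈ B.map e.symm.toEmbedding, f (e n) := by simp [sum_map]
    _ ≤ ∑ n ∈ range #B, f (e n) := by
      simpa using sum_le_sum_range_card_of_antitone hf (B.map e.symm.toEmbedding)

end Rearrangement

lemma map_range_eq_Icc_of_natAbs_sub (e : ℕ ≃ ℤ) (b : ℤ)
    (he : ∀ n, (e n - b).natAbs = (n + 1) / 2) (j : ℕ) :
    (range (2 * j + 1)).map e.toEmbedding = Icc (b - j) (b + j) := by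
  refine eq_of_subset_of_card_le (fun x hx => ?_) ?_
  · obtain ⟨n, hn, rfl⟩ := mem_map.1 hx
    have := he n
    simp only [mem_range] at hn
    simp only [Equiv.coe_toEmbedding, mem_Icc]
    omega
  · simp only [card_map, card_range, Int.card_Icc]
    omega

lemma ASU.exists_equiv {f : ℤ → ℝ} {b : ℤ} (hf : ASU f b) :
    ∃ e : ℕ ≃ ℤ, Antitone (f ∘ e) ∧ ∀ n, (e n - b).natAbs = (n + 1) / 2 := by
  rcases hf with hf | hf
  · refine ⟨spiral.trans (Equiv.addLeft b), hf, fun n => ?_⟩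
    simp [← natAbs_spiral n]
  · refine ⟨spiral.trans ((Equiv.neg ℤ).trans (Equiv.addLeft b)), ?_, fun n => ?_⟩
    · exact fun m n hmn => by simpa [spiral_apply, sub_eq_add_neg] using hf hmn
    · simp [← natAbs_spiral n]

lemma ASU.sum_le_sum_Icc {f : ℤ → ℝ} {b : ℤ} (hf : ASU f b) {B : Finset ℤ} {j : ℕ}
    (hB : #B = 2 * j + 1) : ∑ x ∈ B, f x ≤ ∑ x ∈ Icc (b - j) (b + j), f x := by
  obtain ⟨e, he, hdist⟩ := hf.exists_equiv
  calc ∑ x ∈ B, f x ≤ ∑ n ∈ range (2 * j + 1), f (e n) := by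
        simpa [hB] using sum_le_sum_range_card_of_antitone_comp e he B
    _ = ∑ x ∈ Icc (b - j) (b + j), f x := by
        rw [← map_range_eq_Icc_of_natAbs_sub e b hdist j, sum_map]; rfl

lemma Maj.sum_Icc_le_of_asu {θ θt : ℤ → ℝ} (hmaj : Maj θ θt) {b : ℤ} (hasu : ASU θt b)
    (a : ℤ) (j : ℕ) :
    ∑ x ∈ Icc (a - j) (a + j), θ x ≤ ∑ x ∈ Icc (b - j) (b + j), θt x := by
  obtain ⟨B, hB, hle⟩ := hmaj (Icc (a - j) (a + j))
  exact hle.trans (hasu.sum_le_sum_Icc (by rw [hB, Int.card_Icc]; omega))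

lemma ENNReal.tsum_layercake {α : Type*} {g : ℕ → ℝ} (hg : Monotone g) (hg0 : g 0 = 0)
    (d : α → ℕ) (μ : α → ℝ≥0∞) :
    ∑' x, ENNReal.ofReal (g (d x)) * μ x =
      ∑' j, ENNReal.ofReal (g (j + 1) - g j) * ∑' x, if j < d x then μ x else 0 := by
  have hstep : ∀ j, 0 ≤ g (j + 1) - g j := fun j => sub_nonneg.2 (hg j.le_succ)
  have htelescope :
      ∀ n, ENNReal.ofReal (g n) = ∑ j ∈ range n, ENNReal.ofReal (g (j + 1) - g j) := by
    intro n
    rw [← ENNReal.ofReal_sum_of_nonneg fun j _ => hstep j, sum_range_sub g, hg0, sub_zero]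
  calc ∑' x, ENNReal.ofReal (g (d x)) * μ x
      = ∑' x, ∑' j, ENNReal.ofReal (g (j + 1) - g j) * if j < d x then μ x else 0 := by
        refine tsum_congr fun x => ?_
        rw [htelescope, sum_mul, tsum_eq_sum (s := range (d x))
          fun j hj => by rw [if_neg (by simpa using hj), mul_zero]]
        exact sum_congr rfl fun j hj => by rw [if_pos (mem_range.1 hj)]
    _ = _ := by rw [ENNReal.tsum_comm]; simp_rw [ENNReal.tsum_mul_left]

lemma ENNReal.tsum_ite_notMem_ofReal_eq {α : Type*} [DecidableEq α] {θ : α → ℝ}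
    (hθ : ∀ x, 0 ≤ θ x) (hsum : HasSum θ 1) (s : Finset α) :
    ∑' x, (if x ∉ s then ENNReal.ofReal (θ x) else 0) =
      ENNReal.ofReal (1 - ∑ x ∈ s, θ x) := by
  have hs : HasSum (fun x => if x ∈ s then θ x else 0) (∑ x ∈ s, θ x) := by
    simpa using hasSum_sum_of_ne_finset_zero (f := fun x => if x ∈ s then θ x else 0)
      fun x hx => if_neg hx
  have htail : HasSum (fun x => if x ∉ s then θ x else 0) (1 - ∑ x ∈ s, θ x) := by
    have hsplit :
        (fun x => if x ∉ s then θ x else 0) = fun x => θ x - if x ∈ s then θ x else 0 := by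
      ext x; split_ifs <;> simp
    exact hsplit ▸ hsum.sub hs
  rw [← htail.tsum_eq, ENNReal.ofReal_tsum_of_nonneg (fun x => by split_ifs <;> simp [hθ])
    htail.summable]
  exact tsum_congr fun x => by split_ifs <;> simp

section Distortion

variable {g : ℕ → ℝ} (hg : Monotone g) (hg0 : g 0 = 0)
include hg hg0

lemma tsum_ofReal_distortion_eq {θ : ℤ → ℝ} (hθ : IsPmf θ) (a : ℤ) :
    ∑' x, ENNReal.ofReal (g (x - a).natAbs * θ x) =
      ∑' j : ℕ, ENNReal.ofReal (g (j + 1) - g j) *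
        ENNReal.ofReal (1 - ∑ x ∈ Icc (a - j) (a + j), θ x) := by
  have hgnn : ∀ k, 0 ≤ g k := fun k => hg0 ▸ hg k.zero_le
  simp_rw [ENNReal.ofReal_mul (hgnn _)]
  rw [ENNReal.tsum_layercake hg hg0 (fun x => (x - a).natAbs)]
  refine tsum_congr fun j => ?_
  rw [← ENNReal.tsum_ite_notMem_ofReal_eq hθ.1 hθ.2]
  congr 1
  refine tsum_congr fun x => if_congr ?_ rfl rfl
  simp only [mem_Icc]
  omega

lemma tsum_distortion_le_of_sum_Icc_le {θ θt : ℤ → ℝ} (hθ : IsPmf θ) (hθt : IsPmf θt)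
    {a b : ℤ} (hsumm : Summable fun x => g (x - a).natAbs * θ x)
    (hIcc : ∀ j : ℕ,
      ∑ x ∈ Icc (a - j) (a + j), θ x ≤ ∑ x ∈ Icc (b - j) (b + j), θt x) :
    ∑' x, g (x - b).natAbs * θt x ≤ ∑' x, g (x - a).natAbs * θ x := by
  have hgnn : ∀ k, 0 ≤ g k := fun k => hg0 ▸ hg k.zero_le
  rw [← ENNReal.ofReal_le_ofReal_iff (tsum_nonneg fun x => mul_nonneg (hgnn _) (hθ.1 x))]
  calc ENNReal.ofReal (∑' x, g (x - b).natAbs * θt x)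
      ≤ ∑' x, ENNReal.ofReal (g (x - b).natAbs * θt x) :=
        ENNReal.ofReal_tsum_le_tsum_ofReal fun x => mul_nonneg (hgnn _) (hθt.1 x)
    _ = ∑' j : ℕ, ENNReal.ofReal (g (j + 1) - g j) *
          ENNReal.ofReal (1 - ∑ x ∈ Icc (b - j) (b + j), θt x) :=
        tsum_ofReal_distortion_eq hg hg0 hθt b
    _ ≤ ∑' j : ℕ, ENNReal.ofReal (g (j + 1) - g j) *
          ENNReal.ofReal (1 - ∑ x ∈ Icc (a - j) (a + j), θ x) :=
        ENNReal.tsum_le_tsum fun j => by gcongr; exact hIcc j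
    _ = ∑' x, ENNReal.ofReal (g (x - a).natAbs * θ x) :=
        (tsum_ofReal_distortion_eq hg hg0 hθ a).symm
    _ = ENNReal.ofReal (∑' x, g (x - a).natAbs * θ x) :=
        (ENNReal.ofReal_tsum_of_nonneg (fun x => mul_nonneg (hgnn _) (hθ.1 x)) hsumm).symm

end Distortion

theorem stmt10_general (g : ℕ → ℝ) (hg : Monotone g) (hg0 : g 0 = 0)
    (X : Finset ℤ) (hX : X.Nonempty) (b : ℤ) (hb : b ∈ X)
    (θ θt : ℤ → ℝ) (hθ : IsPmf θ) (hθt : IsPmf θt)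
    (hmaj : Maj θ θt) (hasu : ASU θt b)
    (hsumm : ∀ a : ℤ, Summable (fun x : ℤ => g (x - a).natAbs * θ x)) :
    X.inf' hX (fun a => ∑' x : ℤ, g (x - a).natAbs * θt x) ≤
    X.inf' hX (fun a => ∑' x : ℤ, g (x - a).natAbs * θ x) :=
  (inf'_le _ hb).trans <| le_inf' hX _ fun a _ =>
    tsum_distortion_le_of_sum_Icc_le hg hg0 hθ hθt (hsumm a) (hmaj.sum_Icc_le_of_asu hasu a)

theorem stmt10 (g : ℕ → ℝ) (hg : Monotone g) (hg0 : g 0 = 0) (hgnn : ∀ k, 0 ≤ g k)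
    (X : Finset ℤ) (hX : X.Nonempty) (b : ℤ) (hb : b ∈ X)
    (θ θt : ℤ → ℝ) (hθ : IsPmf θ) (hθt : IsPmf θt)
    (hmaj : Maj θ θt) (hasu : ASU θt b)
    (hsumm : ∀ a : ℤ, Summable (fun x : ℤ => g (x - a).natAbs * θ x))
    (hsummt : ∀ a : ℤ, Summable (fun x : ℤ => g (x - a).natAbs * θt x)) :
    X.inf' hX (fun a => ∑' x : ℤ, g (x - a).natAbs * θt x) ≤
    X.inf' hX (fun a => ∑' x : ℤ, g (x - a).natAbs * θ x) :=
  stmt10_general g hg hg0 X hX b hb θ θt hθ hθt hmaj hasu hsumm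
end
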